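/- For the Takagi function T(x) = ∑ₙ φ(2ⁿ x)/2ⁿ, at every dyadic rational x ∈ (0,1) and every ζ ∈ ℝ, the function z ↦ T(z) − ζ z has a local minimum at x; consequently ∂T(x) = ℝ. -/

import Mathlib

open Filter Topology

/-- Distance from `t` to the nearest integer. -/
noncomputable def nearestIntDist (t : ℝ) : ℝ := |t - round t|

lemma nid_nonneg (t : ℝ) : 0 ≤ nearestIntDist t := abs_nonneg _

lemma nid_le_half (t : ℝ) : nearestIntDist t ≤ 1/2 := abs_sub_round t

lemma nid_int_add (n : ℤ) (t : ℝ) : nearestIntDist ((n : ℝ) + t) = nearestIntDist t := by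
  unfold nearestIntDist
  rw [round_intCast_add]
  push_cast
  ring_nf

lemma nid_le_abs_sub_int (a : ℝ) (n : ℤ) : nearestIntDist a ≤ |a - n| := by
  rcases le_or_gt (1/2) (|a - n|) with h | h
  · exact (abs_sub_round a).trans h
  · have : round a = n := by
      rw [round_eq, Int.floor_eq_iff]
      rw [abs_lt] at h
      constructor <;> push_cast <;> linarith
    unfold nearestIntDist
    rw [this]

lemma nid_lip (a b : ℝ) : nearestIntDist a ≤ |a - b| + nearestIntDist b := by
  calc nearestIntDist a ≤ |a - round b| := nid_le_abs_sub_int a (round b)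
    _ ≤ |a - b| + |b - round b| := abs_sub_le a b (round b)

lemma nid_eq_abs {t : ℝ} (h : |t| ≤ 1/2) : nearestIntDist t = |t| := by
  have le : nearestIntDist t ≤ |t| := by simpa using nid_le_abs_sub_int t 0
  refine le_antisymm le ?_
  rcases eq_or_ne (round t) 0 with h0 | h0
  · unfold nearestIntDist; rw [h0]; simp
  · have h1 : (1:ℝ) ≤ |(round t : ℝ)| := by
      have := Int.one_le_abs h0
      calc (1:ℝ) = ((1:ℤ):ℝ) := by norm_num
        _ ≤ ((|round t| : ℤ) : ℝ) := by exact_mod_cast this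
        _ = |(round t : ℝ)| := by push_cast; rfl
    have h2 : |(round t : ℝ)| - |t| ≤ |t - round t| := by
      have := abs_sub_abs_le_abs_sub (round t : ℝ) t
      have h3 : |(round t : ℝ) - t| = |t - round t| := abs_sub_comm _ _
      linarith
    unfold nearestIntDist
    linarith

noncomputable def takagiTerm (n : ℕ) (z : ℝ) : ℝ := nearestIntDist ((2:ℝ)^n * z) / 2^n

lemma takagiTerm_nonneg (n : ℕ) (z : ℝ) : 0 ≤ takagiTerm n z :=
  div_nonneg (nid_nonneg _) (by positivity)

lemma takagi_summable (z : ℝ) : Summable (fun n => takagiTerm n z) := by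
  apply Summable.of_nonneg_of_le (fun n => takagiTerm_nonneg n z)
    (fun n => ?_) (summable_geometric_two.mul_left (1/2))
  unfold takagiTerm
  rw [div_le_iff₀ (by positivity)]
  calc nearestIntDist ((2:ℝ)^n * z) ≤ 1/2 := nid_le_half _
    _ = 1/2 * (1/2)^n * 2^n := by
        rw [mul_assoc, one_div, inv_pow, inv_mul_cancel₀ (by positivity)]; ring

/-- Main estimate: at a dyadic point, `T(x+h) - T(x) ≥ ζ h` for all small `h`. -/
lemma takagi_main (x : ℝ) (k m : ℕ) (hxeq : x = (k:ℝ) / 2^m) (ζ : ℝ) :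
    ∃ δ > (0:ℝ), ∀ h : ℝ, |h| ≤ δ →
      ζ * h ≤ (∑' n : ℕ, takagiTerm n (x + h)) - ∑' n : ℕ, takagiTerm n x := by
  set c : ℕ := ⌈|ζ|⌉₊ with hc
  set N : ℕ := 2*m + c with hN
  refine ⟨(1/2)^(N+1), by positivity, fun h hh => ?_⟩
  -- integrality of 2^n x for n ≥ m
  have hint : ∀ n, m ≤ n → (2:ℝ)^n * x = ((k * 2^(n-m) : ℕ) : ℝ) := by
    intro n hn
    rw [hxeq]
    push_cast
    rw [show (2:ℝ)^n = 2^(n-m) * 2^m by rw [← pow_add]; congr 1; omega]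
    field_simp
  have hzero : ∀ n, m ≤ n → takagiTerm n x = 0 := by
    intro n hn
    unfold takagiTerm
    rw [hint n hn, show ((k * 2^(n-m) : ℕ) : ℝ) = (((k * 2^(n-m) : ℕ) : ℤ) : ℝ) by push_cast; ring]
    rw [show (((k * 2^(n-m) : ℕ) : ℤ) : ℝ) = (((k * 2^(n-m) : ℕ) : ℤ) : ℝ) + 0 by ring,
      nid_int_add]
    simp [nearestIntDist]
  -- T x equals the finite sum over range m
  have hTx : (∑' n : ℕ, takagiTerm n x) = ∑ n ∈ Finset.range m, takagiTerm n x := by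
    apply tsum_eq_sum
    intro n hn
    exact hzero n (by simpa using hn)
  -- middle terms equal |h|
  have hmid : ∀ n ∈ Finset.Ico m (N+1), takagiTerm n (x + h) = |h| := by
    intro n hn
    simp only [Finset.mem_Ico] at hn
    have hsmall : |(2:ℝ)^n * h| ≤ 1/2 := by
      rw [abs_mul, abs_pow, abs_two]
      calc (2:ℝ)^n * |h| ≤ 2^N * (1/2)^(N+1) := by
            apply mul_le_mul _ hh (abs_nonneg h) (by positivity)
            exact pow_le_pow_right₀ (by norm_num) (by omega)
        _ = 1/2 := by
            rw [one_div, inv_pow, pow_succ]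
            field_simp
      done
    unfold takagiTerm
    rw [mul_add, hint n hn.1,
      show ((k * 2^(n-m) : ℕ) : ℝ) = (((k * 2^(n-m) : ℕ) : ℤ) : ℝ) by push_cast; ring,
      nid_int_add, nid_eq_abs hsmall, abs_mul, abs_pow, abs_two]
    rw [mul_comm, mul_div_assoc, div_self (by positivity), mul_one]
  -- lower bound on head terms
  have hhead : ∀ n ∈ Finset.range m, takagiTerm n x - |h| ≤ takagiTerm n (x + h) := by
    intro n _
    have := nid_lip ((2:ℝ)^n * x) ((2:ℝ)^n * (x + h))
    have habs : |(2:ℝ)^n * x - 2^n * (x+h)| = 2^n * |h| := by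
      rw [show (2:ℝ)^n * x - 2^n * (x+h) = 2^n * (-h) by ring, abs_mul, abs_neg,
        abs_pow, abs_two]
    rw [habs] at this
    unfold takagiTerm
    have hp : (0:ℝ) < 2^n := by positivity
    have h2 : nearestIntDist ((2:ℝ)^n * x) / 2^n ≤ (2^n * |h| + nearestIntDist ((2:ℝ)^n * (x+h))) / 2^n := by gcongr
    have h3 : ((2:ℝ)^n * |h| + nearestIntDist ((2:ℝ)^n * (x+h))) / 2^n
        = |h| + nearestIntDist ((2:ℝ)^n * (x+h)) / 2^n := by field_simp
    linarith
  -- assemble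
  have hsum1 : ∑ n ∈ Finset.range (N+1), takagiTerm n (x+h) ≤ ∑' n : ℕ, takagiTerm n (x+h) :=
    (takagi_summable (x+h)).sum_le_tsum _ (fun n _ => takagiTerm_nonneg n (x+h))
  have hsplit : ∑ n ∈ Finset.range (N+1), takagiTerm n (x+h)
      = ∑ n ∈ Finset.range m, takagiTerm n (x+h) + ∑ n ∈ Finset.Ico m (N+1), takagiTerm n (x+h) := by
    rw [Finset.range_eq_Ico, Finset.range_eq_Ico]
    exact (Finset.sum_Ico_consecutive (fun n => takagiTerm n (x+h)) (k := N+1) (Nat.zero_le m) (by omega)).symm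
  have hmid' : ∑ n ∈ Finset.Ico m (N+1), takagiTerm n (x+h) = (m + c + 1 : ℕ) * |h| := by
    rw [Finset.sum_congr rfl hmid, Finset.sum_const, Nat.card_Ico, nsmul_eq_mul]
    congr 1
    have : N + 1 - m = m + c + 1 := by omega
    rw [this]
  have hhead' : ∑ n ∈ Finset.range m, takagiTerm n x - m * |h|
      ≤ ∑ n ∈ Finset.range m, takagiTerm n (x+h) := by
    have := Finset.sum_le_sum hhead
    rw [Finset.sum_sub_distrib, Finset.sum_const, nsmul_eq_mul, Finset.card_range] at this
    linarith
  have hz : ζ * h ≤ (c + 1 : ℕ) * |h| := by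
    calc ζ * h ≤ |ζ * h| := le_abs_self _
      _ = |ζ| * |h| := abs_mul ζ h
      _ ≤ (c + 1 : ℕ) * |h| := by
          apply mul_le_mul_of_nonneg_right _ (abs_nonneg h)
          push_cast
          linarith [Nat.le_ceil |ζ|]
  have key : (∑' n : ℕ, takagiTerm n x) + (c+1 : ℕ) * |h| ≤ ∑' n : ℕ, takagiTerm n (x+h) := by
    rw [hTx]
    push_cast at hmid' ⊢
    linarith
  linarith

/-- The (viscosity/Fréchet) subdifferential of `f : ℝ → ℝ`, relative to the domain `s`,
at the point `x`. -/
def subdifferentialWithin (f : ℝ → ℝ) (s : Set ℝ) (x : ℝ) : Set ℝ :=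
  {c | ∀ ε > (0 : ℝ), ∀ᶠ h in 𝓝[≠] (0 : ℝ), x + h ∈ s → -ε ≤ (f (x + h) - f x - c * h) / |h|}

theorem stmt19 (x : ℝ) (hx : x ∈ Set.Ioo (0 : ℝ) 1)
    (hdyadic : ∃ k n : ℕ, x = (k : ℝ) / 2 ^ n) :
    (∀ ζ : ℝ, IsLocalMinOn
        (fun z => (∑' n : ℕ, nearestIntDist ((2 : ℝ) ^ n * z) / 2 ^ n) - ζ * z)
        (Set.Icc 0 1) x) ∧
      subdifferentialWithin
        (fun z => ∑' n : ℕ, nearestIntDist ((2 : ℝ) ^ n * z) / 2 ^ n)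
        (Set.Icc 0 1) x = Set.univ := by
  obtain ⟨k, m, hxeq⟩ := hdyadic
  constructor
  · intro ζ
    obtain ⟨δ, hδ, hmain⟩ := takagi_main x k m hxeq ζ
    have hev : ∀ᶠ z in 𝓝 x,
        (∑' n : ℕ, nearestIntDist ((2 : ℝ) ^ n * x) / 2 ^ n) - ζ * x ≤
        (∑' n : ℕ, nearestIntDist ((2 : ℝ) ^ n * z) / 2 ^ n) - ζ * z := by
      filter_upwards [Metric.closedBall_mem_nhds x hδ] with z hz
      have hz' : |z - x| ≤ δ := by simpa [Real.dist_eq] using hz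
      have := hmain (z - x) hz'
      simp only [takagiTerm] at this
      rw [show x + (z - x) = z by ring] at this
      have h2 : ζ * (z - x) = ζ * z - ζ * x := by ring
      linarith
    exact (hev.filter_mono nhdsWithin_le_nhds)
  · apply Set.eq_univ_iff_forall.mpr
    intro ζ ε hε
    obtain ⟨δ, hδ, hmain⟩ := takagi_main x k m hxeq ζ
    have h1 : ∀ᶠ h in 𝓝[≠] (0:ℝ), |h| ≤ δ := by
      apply Filter.Eventually.filter_mono nhdsWithin_le_nhds
      filter_upwards [Metric.closedBall_mem_nhds (0:ℝ) hδ] with h hh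
      simpa [Real.dist_eq] using hh
    have h2 : ∀ᶠ h in 𝓝[≠] (0:ℝ), h ≠ 0 := eventually_mem_nhdsWithin
    filter_upwards [h1, h2] with h hh hne _
    have key := hmain h hh
    simp only [takagiTerm] at key
    have hpos : (0:ℝ) < |h| := abs_pos.mpr hne
    have : (0:ℝ) ≤ ((∑' n : ℕ, nearestIntDist ((2 : ℝ) ^ n * (x+h)) / 2 ^ n)
        - (∑' n : ℕ, nearestIntDist ((2 : ℝ) ^ n * x) / 2 ^ n) - ζ * h) / |h| :=
      div_nonneg (by linarith) hpos.le
    linarith
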